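/- Let A > 0, σ < 0, R > 0, and suppose λ < 0 satisfies |λ| = |σ|·A + |σ|·q·coth(qR) with q = √(A² − λ) > 0 (equivalently λ = σ(A + q·coth(qR))). Then λ ≤ −σ² + 2Aσ. -/

import Mathlib

/-!
Since `coth x > 1` for `x > 0` and `σ < 0`, the eigenvalue relation gives `λ ≤ σ (A + q)`, i.e.
`|σ| q ≤ |λ| - |σ| A`. Squaring and substituting `q² = A² - λ` leaves
`-λ σ² ≤ -λ (2 A σ - λ)`, and dividing by `-λ > 0` gives the bound.
-/

theorem Real.one_lt_cosh_div_sinh {x : ℝ} (hx : 0 < x) : 1 < Real.cosh x / Real.sinh x :=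
  (one_lt_div (Real.sinh_pos_iff.2 hx)).2 (Real.sinh_lt_cosh x)

theorem le_neg_sq_add_two_mul_of_le_mul_add {A σ lam q : ℝ} (hσ : σ ≤ 0) (hlam : lam < 0)
    (hq : 0 ≤ q) (hq2 : q ^ 2 = A ^ 2 - lam) (hle : lam ≤ σ * (A + q)) :
    lam ≤ -σ ^ 2 + 2 * A * σ := by
  have hσq : 0 ≤ -σ * q := mul_nonneg (neg_nonneg.2 hσ) hq
  have hsq : (-σ * q) ^ 2 ≤ (σ * A - lam) ^ 2 := pow_le_pow_left₀ hσq (by linarith) 2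
  have hscaled : -lam * σ ^ 2 ≤ -lam * (2 * A * σ - lam) := by
    linear_combination hsq - σ ^ 2 * hq2
  linarith [le_of_mul_le_mul_left hscaled (neg_pos.2 hlam)]

theorem stmt5_general (A σ R lam q : ℝ) (hσ : σ < 0) (hR : 0 < R)
    (hlam : lam < 0) (hq : q = Real.sqrt (A ^ 2 - lam)) (hqpos : 0 < q)
    (heq : lam = σ * (A + q * (Real.cosh (q * R) / Real.sinh (q * R)))) :
    lam ≤ -σ ^ 2 + 2 * A * σ := by
  have hq2 : q ^ 2 = A ^ 2 - lam := by
    rw [hq, Real.sq_sqrt (by nlinarith [sq_nonneg A])]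
  refine le_neg_sq_add_two_mul_of_le_mul_add hσ.le hlam hqpos.le hq2 ?_
  have hcoth : q ≤ q * (Real.cosh (q * R) / Real.sinh (q * R)) :=
    le_mul_of_one_le_right hqpos.le (Real.one_lt_cosh_div_sinh (mul_pos hqpos hR)).le
  rw [heq]
  exact mul_le_mul_of_nonpos_left (by linarith) hσ.le

/-- For A > 0, σ < 0, R > 0, λ < 0 with q = √(A²−λ) > 0 and
λ = σ(A + q coth(qR)), one has λ ≤ −σ² + 2Aσ. -/
theorem stmt5 (A σ R lam q : ℝ) (hA : 0 < A) (hσ : σ < 0) (hR : 0 < R)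
    (hlam : lam < 0) (hq : q = Real.sqrt (A ^ 2 - lam)) (hqpos : 0 < q)
    (heq : lam = σ * (A + q * (Real.cosh (q * R) / Real.sinh (q * R)))) :
    lam ≤ -σ ^ 2 + 2 * A * σ :=
  stmt5_general A σ R lam q hσ hR hlam hq hqpos heq
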